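/- For n ≥ 2 and 1 ≤ a ≤ n, the Hall inner product ⟨h_n[h_1·h_1], s_{(2n-a,a)}⟩ equals a/2 + 1 if a is even and (a+1)/2 if a is odd. -/

import Mathlib

open MvPolynomial

/-- The ring of symmetric functions, modeled as the polynomial ring
`ℚ[h₁, h₂, …]` in the complete homogeneous symmetric functions (variable `i`
corresponds to `h_{i+1}`). -/
abbrev SymF : Type := MvPolynomial ℕ ℚ

/-- The complete homogeneous symmetric function `h_n` as an element of `SymF`. -/
noncomputable def hh : ℕ → SymF
  | 0 => 1
  | n + 1 => X n

/-- The expression of `h_n` in terms of the power sums (in the polynomial ring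
`ℚ[p₁, p₂, …]`, variable `i` corresponding to `p_{i+1}`), via Newton's identity
`n·h_n = ∑_{i=1}^n p_i h_{n-i}`. -/
noncomputable def hInP : ℕ → MvPolynomial ℕ ℚ
  | 0 => 1
  | n + 1 =>
      ((n + 1 : ℚ))⁻¹ • ∑ i ∈ Finset.range (n + 1), X i * hInP (n - i)
  termination_by n => n
  decreasing_by omega

/-- The power sum symmetric function `p_n` as an element of `SymF`, via Newton's
identity `p_n = n·h_n - ∑_{i=1}^{n-1} p_i h_{n-i}`. -/
noncomputable def pSym : ℕ → SymF
  | 0 => 1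
  | n + 1 =>
      ((n : ℚ) + 1) • hh (n + 1) -
        ∑ i ∈ (Finset.range n).attach, pSym (i.1 + 1) * hh (n - i.1)
  termination_by n => n
  decreasing_by
    have h := Finset.mem_range.mp i.2
    omega

/-- The isomorphism expressing a symmetric function in the power sum basis. -/
noncomputable def toP : SymF →ₐ[ℚ] MvPolynomial ℕ ℚ :=
  aeval (fun i => hInP (i + 1))

/-- `psub k g = p_k[g]`, plethysm of a power sum with `g`: substitute `p_i ↦ p_{ik}`
in the power-sum expression of `g`. -/
noncomputable def psub (k : ℕ) (g : SymF) : SymF :=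
  aeval (fun i => pSym ((i + 1) * k)) (toP g)

/-- Plethysm `f[g]` of symmetric functions: substitute `p_k ↦ p_k[g]` in the
power-sum expression of `f`. -/
noncomputable def pleth (f g : SymF) : SymF :=
  aeval (fun i => psub (i + 1) g) (toP f)

/-- `h_z` for integer index: zero for negative `z`. -/
noncomputable def hZ (z : ℤ) : SymF := if 0 ≤ z then hh z.toNat else 0

/-- The Schur function of a partition given as a weakly decreasing list of parts,
defined by the Jacobi–Trudi determinant `s_λ = det(h_{λ_i - i + j})`. -/
noncomputable def schur (l : List ℕ) : SymF :=
  (Matrix.of fun i j : Fin l.length =>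
    hZ ((l.get i : ℤ) + (j : ℤ) - (i : ℤ))).det

/-- `z_λ` for the monomial `d` in the power sums: `∏_i i^{m_i} m_i!`. -/
def zQ (d : ℕ →₀ ℕ) : ℚ :=
  d.prod fun i m => ((i : ℚ) + 1) ^ m * (Nat.factorial m : ℚ)

/-- The Hall inner product, characterized by `⟨p_λ, p_μ⟩ = δ_{λμ} z_λ`, computed in
the power sum basis. -/
noncomputable def hall (f g : SymF) : ℚ :=
  ∑ d ∈ (toP f).support, zQ d * (toP f).coeff d * (toP g).coeff d

/-- The decreasingly sorted list of parts of a partition. -/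
def sortedParts {N : ℕ} (π : Nat.Partition N) : List ℕ :=
  (π.parts.sort (· ≤ ·)).reverse

/-!
In power-sum coordinates the Hall product is `⟨p_λ, p_μ⟩ = δ_{λμ} z_λ`, `h_c = ∑_{|λ| = c} p_λ / z_λ`,
and multiplication by `p_k` is adjoint to `k ∂/∂p_k`. Since `k ∂h_c/∂p_k = h_{c-k}`, induction on `f`
shows that `⟨f, h_c h_{c'}⟩` is the coefficient of `x^c y^{c'}` in the specialization `f(x, y)`,
`p_k ↦ x^k + y^k`.

For `f = h_n[h_1²]` the specialization sends `p_k` to `(x^k + y^k)² = 2 (xy)^k + (x²)^k + (y²)^k`,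
so `f(x, y) = h_n(xy, xy, x², y²)`: by Newton's identity both generating series `∑ h_n tⁿ` have the
same logarithmic derivative. A monomial `x^{2i+s} y^{2j+s}` with `i + j + s = n` occurs `s + 1`
times, so for `b ≤ n` the coefficient of `x^{2n-b} y^b` is `∑_{s ≤ b, s ≡ b mod 2} (s + 1)`.
By Jacobi–Trudi `s_{(2n-a,a)} = h_{2n-a} h_a - h_{2n-a+1} h_{a-1}`, so the answer is the
difference of two consecutive such sums.
-/

open MvPolynomial Finset

namespace HallPlethysm

noncomputable abbrev size : (ℕ →₀ ℕ) →+ ℕ := Finsupp.weight (· + 1)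

lemma size_single (i m : ℕ) : size (Finsupp.single i m) = m * (i + 1) :=
  Finsupp.weight_single _ _ _

lemma size_eq_zero_iff {d : ℕ →₀ ℕ} : size d = 0 ↔ d = 0 := by
  refine ⟨fun h => Finsupp.ext fun i => ?_, fun h => by rw [h, map_zero]⟩
  by_contra hi
  have := Finsupp.le_weight_of_ne_zero' (· + 1) hi
  simp_all

lemma lt_size_of_ne_zero {d : ℕ →₀ ℕ} {i : ℕ} (hi : d i ≠ 0) : i < size d :=
  Finsupp.le_weight_of_ne_zero' (· + 1) hi

lemma size_add_single (d : ℕ →₀ ℕ) (i : ℕ) :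
    size (d + Finsupp.single i 1) = size d + (i + 1) := by
  rw [map_add, size_single, one_mul]

lemma zQ_pos (d : ℕ →₀ ℕ) : 0 < zQ d :=
  Finset.prod_pos fun _ _ => by positivity

lemma zQ_zero : zQ 0 = 1 := Finsupp.prod_zero_index

lemma zQ_add_single (d : ℕ →₀ ℕ) (i : ℕ) :
    zQ (d + Finsupp.single i 1) = zQ d * (((i : ℚ) + 1) * ((d i : ℚ) + 1)) := by
  have hg : ∀ j : ℕ, ((j : ℚ) + 1) ^ 0 * (Nat.factorial 0 : ℚ) = 1 := by simp
  rw [zQ, zQ, ← Finsupp.mul_prod_erase' _ i _ hg, ← Finsupp.mul_prod_erase' d i _ hg,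
    Finsupp.erase_add, Finsupp.erase_single, add_zero]
  simp only [Finsupp.add_apply, Finsupp.single_eq_same, pow_succ, Nat.factorial_succ]
  push_cast
  ring

lemma coeff_hInP (n : ℕ) (d : ℕ →₀ ℕ) :
    (hInP n).coeff d = if size d = n then (zQ d)⁻¹ else 0 := by
  induction n using Nat.strong_induction_on generalizing d with
  | _ n IH =>
  cases n with
  | zero =>
    rw [hInP, coeff_one]
    by_cases hd : d = 0
    · simp [hd, zQ_zero]
    · simp [hd, Ne.symm hd, size_eq_zero_iff]
  | succ n =>
    have hterm : ∀ i ∈ range (n + 1), (X i * hInP (n - i)).coeff d =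
        if size d = n + 1 then ((i : ℚ) + 1) * d i / zQ d else 0 := by
      intro i hi
      rw [coeff_X_mul']
      by_cases hdi : d i = 0
      · simp [hdi]
      obtain ⟨u, rfl⟩ : ∃ u, d = u + Finsupp.single i 1 :=
        ⟨_, (Finsupp.sub_add_single_one_cancel hdi).symm⟩
      have hi := mem_range.mp hi
      simp only [Finsupp.mem_support_iff.mpr hdi, if_true, add_tsub_cancel_right,
        IH (n - i) (by omega), size_add_single, zQ_add_single, Finsupp.add_apply,
        Finsupp.single_eq_same, Nat.cast_add, Nat.cast_one]
      have := zQ_pos u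
      split_ifs <;> first | omega | field_simp
    rw [hInP, coeff_smul, coeff_sum, sum_congr rfl hterm]
    split_ifs with hd
    · have hsum : ∑ i ∈ range (n + 1), ((i : ℚ) + 1) * d i = n + 1 := by
        have hsupp : d.support ⊆ range (n + 1) := fun i hi =>
          mem_range.mpr (hd ▸ lt_size_of_ne_zero (Finsupp.mem_support_iff.mp hi))
        have := Finsupp.sum_of_support_subset d hsupp (fun i m => m • (i + 1)) (by simp)
        rw [← Finsupp.weight_apply, hd] at this
        simp only [smul_eq_mul] at this
        exact_mod_cast (this.trans (sum_congr rfl fun i _ => mul_comm _ _)).symm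
      rw [← sum_div, hsum, smul_eq_mul]
      have := zQ_pos d
      field_simp
    · simp

lemma smul_pderiv_hInP (i c : ℕ) :
    ((i : ℚ) + 1) • pderiv i (hInP c) = if i + 1 ≤ c then hInP (c - (i + 1)) else 0 := by
  ext d
  rw [coeff_smul, coeff_pderiv, coeff_hInP, size_add_single, zQ_add_single]
  split_ifs with h1 h2 h2
  · rw [coeff_hInP, if_pos (by omega), smul_eq_mul]
    have := zQ_pos d
    field_simp
  · omega
  · rw [coeff_hInP, if_neg (by omega)]
    simp
  · simp

lemma hInP_one : hInP 1 = X 0 := by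
  simp [hInP]

lemma toP_hh (k : ℕ) : toP (hh k) = hInP k := by
  cases k with
  | zero => rw [hh, map_one, hInP]
  | succ k => rw [hh, toP, aeval_X]

lemma toP_pSym (m : ℕ) : toP (pSym (m + 1)) = X m := by
  induction m using Nat.strong_induction_on with
  | _ n IH =>
  have hsum : ∑ i ∈ (range n).attach, toP (pSym (i.1 + 1) * hh (n - i.1)) =
      ∑ i ∈ range n, X i * hInP (n - i) := by
    rw [← sum_attach (range n)]
    exact sum_congr rfl fun i _ => by rw [map_mul, toP_hh, IH i (mem_range.mp i.2)]
  have hnewton :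
      ((n : ℚ) + 1) • hInP (n + 1) = ∑ i ∈ range (n + 1), X i * hInP (n - i) := by
    rw [hInP, smul_smul, mul_inv_cancel₀ (by positivity), one_smul]
  rw [pSym, map_sub, map_smul, toP_hh, map_sum, hsum, hnewton, sum_range_succ, Nat.sub_self,
    hInP, mul_one, add_sub_cancel_left]

lemma toP_psub (k : ℕ) (g : SymF) :
    toP (psub (k + 1) g) = rename (fun i => (i + 1) * (k + 1) - 1) (toP g) := by
  rw [psub, ← AlgHom.comp_apply, comp_aeval]
  congr 1
  refine algHom_ext fun i => ?_
  rw [aeval_X, rename_X, ← toP_pSym, Nat.sub_add_cancel (Nat.mul_pos i.succ_pos k.succ_pos)]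

lemma toP_pleth (f g : SymF) :
    toP (pleth f g) = aeval (fun i => toP (psub (i + 1) g)) (toP f) := by
  rw [pleth, ← AlgHom.comp_apply, comp_aeval]

lemma toP_pleth_hh_h1_sq (n : ℕ) :
    toP (pleth (hh n) (hh 1 * hh 1)) = aeval (fun i => X i ^ 2) (hInP n) := by
  rw [toP_pleth, toP_hh]
  congr 2
  funext i
  rw [toP_psub, map_mul, toP_hh, hInP_one, map_mul, rename_X, sq, zero_add, one_mul,
    Nat.add_sub_cancel]

lemma schur_pair (b a : ℕ) (ha : 1 ≤ a) :
    schur [b, a] = hh b * hh a - hh (b + 1) * hh (a - 1) := by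
  simp [schur, Matrix.det_fin_two, hZ, ha]
  omega

def hallP (A B : MvPolynomial ℕ ℚ) : ℚ :=
  ∑ d ∈ A.support, zQ d * A.coeff d * B.coeff d

lemma hall_eq_hallP (f g : SymF) : hall f g = hallP (toP f) (toP g) := rfl

lemma hallP_monomial_left (u : ℕ →₀ ℕ) (a : ℚ) (B : MvPolynomial ℕ ℚ) :
    hallP (monomial u a) B = zQ u * a * B.coeff u := by
  classical
  rw [hallP, support_monomial]
  split_ifs with h <;> simp [h]

lemma hallP_add_left (A A' B : MvPolynomial ℕ ℚ) :
    hallP (A + A') B = hallP A B + hallP A' B :=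
  Finsupp.sum_add_index' (h := fun d a => zQ d * a * B.coeff d) (by simp) (fun _ _ _ => by ring)

lemma hallP_add_right (A B B' : MvPolynomial ℕ ℚ) :
    hallP A (B + B') = hallP A B + hallP A B' := by
  simp only [hallP, coeff_add, mul_add, sum_add_distrib]

lemma hallP_smul_right (A B : MvPolynomial ℕ ℚ) (r : ℚ) :
    hallP A (r • B) = r * hallP A B := by
  simp only [hallP, coeff_smul, smul_eq_mul, mul_sum]
  exact sum_congr rfl fun _ _ => by ring

lemma hallP_zero_right (A : MvPolynomial ℕ ℚ) : hallP A 0 = 0 := by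
  simp [hallP]

lemma hallP_sub_right (A B B' : MvPolynomial ℕ ℚ) :
    hallP A (B - B') = hallP A B - hallP A B' := by
  simp only [hallP, coeff_sub, mul_sub, sum_sub_distrib]

lemma hallP_mul_X (A B : MvPolynomial ℕ ℚ) (i : ℕ) :
    hallP (A * X i) B = ((i : ℚ) + 1) * hallP A (pderiv i B) := by
  induction A using MvPolynomial.induction_on' with
  | monomial u a =>
    rw [X, monomial_mul, mul_one, hallP_monomial_left, hallP_monomial_left, coeff_pderiv,
      zQ_add_single]
    ring
  | add A A' hA hA' => rw [add_mul, hallP_add_left, hallP_add_left, hA, hA', mul_add]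

lemma hall_sub_right (f g g' : SymF) : hall f (g - g') = hall f g - hall f g' := by
  simp only [hall_eq_hallP, map_sub, hallP_sub_right]

noncomputable def evalTwo : MvPolynomial ℕ ℚ →ₐ[ℚ] MvPolynomial (Fin 2) ℚ :=
  aeval fun i => X 0 ^ (i + 1) + X 1 ^ (i + 1)

noncomputable def expXY (c c' : ℕ) : Fin 2 →₀ ℕ := Finsupp.single 0 c + Finsupp.single 1 c'

lemma expXY_inj {a b c d : ℕ} : expXY a b = expXY c d ↔ a = c ∧ b = d := by
  simp [expXY, Finsupp.ext_iff, Fin.forall_fin_two]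

lemma expXY_eq_zero_iff {c c' : ℕ} : expXY c c' = 0 ↔ c = 0 ∧ c' = 0 := by
  simp [expXY, Finsupp.ext_iff, Fin.forall_fin_two]

lemma coeff_expXY_mul_X_zero_pow (P : MvPolynomial (Fin 2) ℚ) (c c' k : ℕ) :
    (P * X 0 ^ k).coeff (expXY c c') = if k ≤ c then P.coeff (expXY (c - k) c') else 0 := by
  rw [X_pow_eq_monomial, coeff_mul_monomial', mul_one]
  refine if_congr (by simp [expXY, Finsupp.le_def, Fin.forall_fin_two]) ?_ rfl
  congr 1
  ext j; fin_cases j <;> simp [expXY]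

lemma coeff_expXY_mul_X_one_pow (P : MvPolynomial (Fin 2) ℚ) (c c' k : ℕ) :
    (P * X 1 ^ k).coeff (expXY c c') = if k ≤ c' then P.coeff (expXY c (c' - k)) else 0 := by
  rw [X_pow_eq_monomial, coeff_mul_monomial', mul_one]
  refine if_congr (by simp [expXY, Finsupp.le_def, Fin.forall_fin_two]) ?_ rfl
  congr 1
  ext j; fin_cases j <;> simp [expXY]

lemma hallP_hInP_mul_hInP (A : MvPolynomial ℕ ℚ) (c c' : ℕ) :
    hallP A (hInP c * hInP c') = (evalTwo A).coeff (expXY c c') := by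
  induction A using MvPolynomial.induction_on generalizing c c' with
  | C a =>
    have hconst : ∀ k, (hInP k).coeff 0 = if k = 0 then 1 else 0 := fun k => by
      rw [coeff_hInP, map_zero, zQ_zero, inv_one]
      exact if_congr eq_comm rfl rfl
    rw [← monomial_zero', hallP_monomial_left, zQ_zero, coeff_mul, Finsupp.antidiagonal_zero,
      sum_singleton, hconst, hconst, monomial_zero', evalTwo, aeval_C, algebraMap_eq, coeff_C]
    simp only [eq_comm (a := (0 : Fin 2 →₀ ℕ)), expXY_eq_zero_iff]
    split_ifs <;> simp_all
  | add A A' hA hA' => rw [hallP_add_left, hA, hA', map_add, coeff_add]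
  | mul_X A i ih =>
    rw [hallP_mul_X, ← hallP_smul_right, pderiv_mul, smul_add, ← smul_mul_assoc,
      ← mul_smul_comm, smul_pderiv_hInP, smul_pderiv_hInP, hallP_add_right, map_mul, evalTwo,
      aeval_X, ← evalTwo, mul_add, coeff_add, coeff_expXY_mul_X_zero_pow,
      coeff_expXY_mul_X_one_pow]
    split_ifs <;> simp [ih, hallP_zero_right]

lemma hall_hh_mul_hh (f : SymF) (c c' : ℕ) :
    hall f (hh c * hh c') = (evalTwo (toP f)).coeff (expXY c c') := by
  rw [hall_eq_hallP, map_mul, toP_hh, toP_hh, hallP_hInP_mul_hInP]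

section LogDeriv

variable {R : Type*} [CommRing R]

def HasLogDeriv (H Q : PowerSeries R) : Prop :=
  PowerSeries.constantCoeff H = 1 ∧ PowerSeries.derivative R H = Q * H

lemma HasLogDeriv.unique [Algebra ℚ R] {H G Q : PowerSeries R} (hH : HasLogDeriv H Q)
    (hG : HasLogDeriv G Q) : H = G := by
  ext n
  induction n using Nat.strong_induction_on with
  | _ n ih =>
  cases n with
  | zero => simp only [PowerSeries.coeff_zero_eq_constantCoeff_apply, hH.1, hG.1]
  | succ m =>
    have hunit : IsUnit ((m : R) + 1) := by
      simpa using (IsUnit.mk0 ((m : ℚ) + 1) (by positivity)).map (algebraMap ℚ R)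
    have hrec : ∀ F, HasLogDeriv F Q → PowerSeries.coeff (m + 1) F * ((m : R) + 1) =
        ∑ p ∈ antidiagonal m, PowerSeries.coeff p.1 Q * PowerSeries.coeff p.2 F :=
      fun F hF => by rw [← PowerSeries.coeff_derivative, hF.2, PowerSeries.coeff_mul]
    refine hunit.mul_left_injective ?_
    simp only [hrec H hH, hrec G hG]
    refine sum_congr rfl fun p hp => ?_
    rw [ih p.2 (by have := mem_antidiagonal.mp hp; omega)]

lemma HasLogDeriv.mul {H G Q Q' : PowerSeries R} (hH : HasLogDeriv H Q)
    (hG : HasLogDeriv G Q') : HasLogDeriv (H * G) (Q + Q') := by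
  refine ⟨by rw [map_mul, hH.1, hG.1, one_mul], ?_⟩
  rw [Derivation.leibniz, hH.2, hG.2, smul_eq_mul, smul_eq_mul]
  ring

noncomputable def geomSeries (z : R) : PowerSeries R := PowerSeries.mk (z ^ ·)

lemma hasLogDeriv_geomSeries (z : R) :
    HasLogDeriv (geomSeries z) (PowerSeries.mk fun n => z ^ (n + 1)) := by
  refine ⟨by rw [geomSeries, PowerSeries.constantCoeff_mk, pow_zero], ?_⟩
  ext n
  have hterm : ∀ p ∈ antidiagonal n,
      PowerSeries.coeff p.1 (PowerSeries.mk fun n => z ^ (n + 1)) *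
        PowerSeries.coeff p.2 (geomSeries z) = z ^ (n + 1) := fun p hp => by
    rw [PowerSeries.coeff_mk, geomSeries, PowerSeries.coeff_mk, ← pow_add,
      ← mem_antidiagonal.mp hp]
    ring_nf
  rw [PowerSeries.coeff_derivative, PowerSeries.coeff_mul, sum_congr rfl hterm, geomSeries,
    PowerSeries.coeff_mk, sum_const, Nat.card_antidiagonal, nsmul_eq_mul, mul_comm]
  push_cast
  ring

lemma hasLogDeriv_aeval_hInP [Algebra ℚ R] (q : ℕ → R) :
    HasLogDeriv (PowerSeries.mk fun n => aeval q (hInP n)) (PowerSeries.mk q) := by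
  refine ⟨by rw [PowerSeries.constantCoeff_mk, hInP, map_one], ?_⟩
  ext n
  rw [PowerSeries.coeff_derivative, PowerSeries.coeff_mul, PowerSeries.coeff_mk, hInP, map_smul,
    map_sum, Nat.sum_antidiagonal_eq_sum_range_succ_mk]
  simp only [PowerSeries.coeff_mk, map_mul, aeval_X]
  have hcast : (n : R) + 1 = ((n : ℚ) + 1) • (1 : R) := by
    rw [add_smul, one_smul, Nat.cast_smul_eq_nsmul, nsmul_one]
  rw [hcast, mul_smul_comm, mul_one, smul_smul, mul_inv_cancel₀ (by positivity), one_smul]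

lemma coeff_geomSeries_mul_geomSeries (x y : R) (r : ℕ) :
    PowerSeries.coeff r (geomSeries x * geomSeries y) =
      ∑ p ∈ antidiagonal r, x ^ p.1 * y ^ p.2 := by
  simp only [PowerSeries.coeff_mul, geomSeries, PowerSeries.coeff_mk]

lemma coeff_geomSeries_mul_self (z : R) (s : ℕ) :
    PowerSeries.coeff s (geomSeries z * geomSeries z) = (s + 1) • z ^ s := by
  rw [coeff_geomSeries_mul_geomSeries, sum_congr rfl fun p hp => by
    rw [← pow_add, mem_antidiagonal.mp hp], sum_const, Nat.card_antidiagonal]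

end LogDeriv

lemma evalTwo_toP_pleth (n : ℕ) :
    evalTwo (toP (pleth (hh n) (hh 1 * hh 1))) = PowerSeries.coeff n
      (geomSeries (X 0 * X 1) * geomSeries (X 0 * X 1) *
        (geomSeries (X 0 ^ 2) * geomSeries (X 1 ^ 2))) := by
  set q : ℕ → MvPolynomial (Fin 2) ℚ := fun i => (X 0 ^ (i + 1) + X 1 ^ (i + 1)) ^ 2
  have hcomp : evalTwo.comp (aeval fun i => X i ^ 2) = aeval q := by
    rw [comp_aeval]
    simp only [map_pow, evalTwo, aeval_X, q]
  have hq : PowerSeries.mk q =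
      PowerSeries.mk (fun i => (X 0 * X 1) ^ (i + 1)) +
        PowerSeries.mk (fun i => (X 0 * X 1) ^ (i + 1)) +
        (PowerSeries.mk (fun i => (X 0 ^ 2) ^ (i + 1)) +
          PowerSeries.mk (fun i => (X 1 ^ 2) ^ (i + 1))) := by
    refine PowerSeries.ext fun i => ?_
    simp only [PowerSeries.coeff_mk, map_add, q]
    ring
  have h := hasLogDeriv_aeval_hInP q
  rw [hq] at h
  rw [toP_pleth_hh_h1_sq, ← AlgHom.comp_apply, hcomp,
    ← h.unique (((hasLogDeriv_geomSeries _).mul (hasLogDeriv_geomSeries _)).mul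
      ((hasLogDeriv_geomSeries _).mul (hasLogDeriv_geomSeries _))), PowerSeries.coeff_mk]

lemma sum_antidiagonal_boole (r s c c' : ℕ) (h : c + c' = 2 * (r + s)) (hc : c' ≤ c) :
    ∑ p ∈ antidiagonal r, (if 2 * p.1 + s = c ∧ 2 * p.2 + s = c' then (1 : ℚ) else 0) =
      if s ≤ c' ∧ s % 2 = c' % 2 then 1 else 0 := by
  split_ifs with hs
  · rw [sum_eq_single_of_mem ((c - s) / 2, (c' - s) / 2)
      (HasAntidiagonal.mem_antidiagonal.mpr (by omega))
      fun p hp hne => if_neg fun hp' => hne (Prod.ext (by omega) (by omega)), if_pos (by omega)]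
  · refine sum_eq_zero fun p hp => if_neg ?_
    have := HasAntidiagonal.mem_antidiagonal.mp hp
    omega

def paritySum (b : ℕ) : ℚ := ∑ s ∈ range (b + 1), if s % 2 = b % 2 then (s : ℚ) + 1 else 0

lemma paritySum_add_two (b : ℕ) : paritySum (b + 2) = paritySum b + (b + 3) := by
  rw [paritySum, sum_range_succ, sum_range_succ, if_neg (by omega), if_pos rfl, add_zero,
    paritySum, sum_congr rfl fun s _ =>
      if_congr (by omega : s % 2 = (b + 2) % 2 ↔ s % 2 = b % 2) rfl rfl]
  push_cast
  ring

lemma paritySum_succ_sub (b : ℕ) : paritySum (b + 1) - paritySum b =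
    if Even (b + 1) then ((b + 1 : ℕ) : ℚ) / 2 + 1 else (((b + 1 : ℕ) : ℚ) + 1) / 2 := by
  induction b with
  | zero => simp [paritySum, sum_range_succ]
  | succ b ih =>
    rw [paritySum_add_two, show paritySum b + (b + 3) - paritySum (b + 1) =
      (b + 3) - (paritySum (b + 1) - paritySum b) by ring, ih]
    rcases Nat.even_or_odd (b + 1) with hb | hb
    · rw [if_pos hb, if_neg fun h => Nat.even_add_one.mp h hb]
      push_cast; ring
    · have hb := Nat.not_even_iff_odd.mpr hb
      rw [if_neg hb, if_pos (Nat.even_add_one.mpr hb)]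
      push_cast; ring

lemma coeff_expXY_coeff_geomSeries_mul (n b s : ℕ) (hb : b ≤ n) (hs : s ≤ n) :
    (PowerSeries.coeff s (geomSeries (X 0 * X 1) * geomSeries (X 0 * X 1)) *
      PowerSeries.coeff (n - s) (geomSeries (X 0 ^ 2) * geomSeries (X 1 ^ 2)) :
        MvPolynomial (Fin 2) ℚ).coeff (expXY (2 * n - b) b) =
      if s ≤ b ∧ s % 2 = b % 2 then (s : ℚ) + 1 else 0 := by
  have hmono : ∀ i j : ℕ,
      (X 0 * X 1 : MvPolynomial (Fin 2) ℚ) ^ s * ((X 0 ^ 2) ^ i * (X 1 ^ 2) ^ j) =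
        monomial (expXY (2 * i + s) (2 * j + s)) 1 := fun i j => by
    rw [expXY, ← one_mul (1 : ℚ), ← monomial_mul, ← X_pow_eq_monomial,
      ← X_pow_eq_monomial]
    ring
  rw [coeff_geomSeries_mul_self, coeff_geomSeries_mul_geomSeries, mul_sum, coeff_sum]
  simp only [smul_mul_assoc, hmono, coeff_smul, coeff_monomial, expXY_inj]
  rw [← smul_sum, sum_antidiagonal_boole _ _ _ _ (by omega) (by omega)]
  split_ifs <;> simp

lemma coeff_evalTwo_toP_pleth (n b : ℕ) (hb : b ≤ n) :
    (evalTwo (toP (pleth (hh n) (hh 1 * hh 1)))).coeff (expXY (2 * n - b) b) = paritySum b := by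
  rw [evalTwo_toP_pleth, PowerSeries.coeff_mul, coeff_sum,
    Nat.sum_antidiagonal_eq_sum_range_succ_mk, sum_congr rfl fun s hs =>
      coeff_expXY_coeff_geomSeries_mul n b s hb (by have := mem_range.mp hs; omega),
    paritySum, ← sum_filter, ← sum_filter]
  congr 1
  ext s
  simp only [mem_filter, mem_range]
  omega

end HallPlethysm

open HallPlethysm

theorem hall_hn_h1h1_two_rows_general (n a : ℕ) (ha1 : 1 ≤ a) (ha2 : a ≤ n) :
    hall (pleth (hh n) (hh 1 * hh 1)) (schur [2 * n - a, a]) =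
      if Even a then (a : ℚ) / 2 + 1 else ((a : ℚ) + 1) / 2 := by
  obtain ⟨b, rfl⟩ : ∃ b, a = b + 1 := ⟨a - 1, by omega⟩
  rw [schur_pair _ _ ha1, hall_sub_right, hall_hh_mul_hh, hall_hh_mul_hh,
    show 2 * n - (b + 1) + 1 = 2 * n - b by omega, Nat.add_sub_cancel,
    coeff_evalTwo_toP_pleth n (b + 1) ha2, coeff_evalTwo_toP_pleth n b (by omega),
    paritySum_succ_sub]

/-- For `n ≥ 2` and `1 ≤ a ≤ n`, the Hall inner product
`⟨h_n[h_1 h_1], s_{(2n-a,a)}⟩` equals `a/2 + 1` if `a` is even and `(a+1)/2` if `a`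
is odd. -/
theorem hall_hn_h1h1_two_rows (n a : ℕ) (hn : 2 ≤ n) (ha1 : 1 ≤ a) (ha2 : a ≤ n) :
    hall (pleth (hh n) (hh 1 * hh 1)) (schur [2 * n - a, a]) =
      if Even a then (a : ℚ) / 2 + 1 else ((a : ℚ) + 1) / 2 :=
  hall_hn_h1h1_two_rows_general n a ha1 ha2
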